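/- Let H be an infinite-dimensional complex Hilbert space. Then K(H) is ball proximinal in B(H): for every bounded linear operator T on H there exists a compact operator K with ‖K‖ ≤ 1 such that ‖T − K‖ = d(T, B_{K(H)}). -/

import Mathlib

/-!
Write `a` for the distance from `T` to the unit ball of `K(H)` and `T = U |T|` for the polar
decomposition. The candidate is `K = U (|T| - a)⁺ = T g(T⋆T)` with `g(s) = (√s - a)⁺ / √s`:
then `T - K = U min(|T|, a)` has norm at most `a`, and `‖K‖ ≤ ‖T‖ - a ≤ 1`.
`K` is compact because `g` is a uniform limit of functions `f` vanishing on `(-∞, c]` for some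
`c > a²`, and each `f(T⋆T)` has finite rank: on its range `T` is bounded below by `√c`, whereas
`T` lies within `√c` of a compact operator.
-/

section CStar

variable {A : Type*} [CStarAlgebra A]

lemma star_mul_self_mul_cfc_star_mul_self (a : A) {h : ℝ → ℝ} (hh : Continuous h) :
    star (a * cfc h (star a * a)) * (a * cfc h (star a * a)) =
      cfc (fun s => s * h s ^ 2) (star a * a) := by
  have hb : IsSelfAdjoint (cfc h (star a * a)) := IsSelfAdjoint.cfc
  calc star (a * cfc h (star a * a)) * (a * cfc h (star a * a))
      = cfc h (star a * a) * cfc (fun s => s) (star a * a) * cfc h (star a * a) := by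
        rw [star_mul, hb.star_eq, cfc_id' ℝ (star a * a), mul_assoc, ← mul_assoc (star a),
          ← mul_assoc]
    _ = cfc (fun s => s * h s ^ 2) (star a * a) := by
        rw [← cfc_mul h (fun s => s) _ (by fun_prop) (by fun_prop),
          ← cfc_mul _ h _ (by fun_prop) (by fun_prop)]
        exact cfc_congr fun s _ => by ring

lemma IsClosed.cfc_mem_of_forall_eqOn_zero_Iic {S : Set A} (hS : IsClosed S) {a : A} {c₀ : ℝ}
    (hmem : ∀ c > c₀, ∀ f : ℝ → ℝ, Continuous f → Set.EqOn f 0 (Set.Iic c) → cfc f a ∈ S)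
    {g : ℝ → ℝ} (hg : Continuous g) (hg0 : Set.EqOn g 0 (Set.Iic c₀)) : cfc g a ∈ S := by
  rw [← hS.closure_eq, Metric.mem_closure_iff]
  intro ε hε
  obtain ⟨δ, hδ, hgδ⟩ :=
    Metric.continuousAt_iff.mp (hg.continuousAt (x := c₀)) (ε / 2) (half_pos hε)
  have hsmall : ∀ s ≤ c₀ + δ / 2, |g s| ≤ ε / 2 := by
    intro s hs
    rcases le_or_gt s c₀ with hsc | hsc
    · simpa [hg0 hsc] using (half_pos hε).le
    · have := hgδ (x := s) (by rw [Real.dist_eq, abs_lt]; constructor <;> linarith)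
      rw [Real.dist_eq, hg0 (le_refl c₀), Pi.zero_apply, sub_zero] at this
      exact this.le
  -- `g` minus its truncation to `[-ε/2, ε/2]`: it vanishes where `|g| ≤ ε/2` and is
  -- `ε/2`-close to `g`.
  set h : ℝ → ℝ := fun s => g s - max (-(ε / 2)) (min (ε / 2) (g s)) with h_def
  refine ⟨cfc h a, hmem (c₀ + δ / 2) (by linarith) h (by fun_prop) fun s hs => ?_, ?_⟩
  · obtain ⟨hlo, hhi⟩ := abs_le.mp (hsmall s hs)
    simp only [h, min_eq_right hhi, max_eq_right hlo, sub_self, Pi.zero_apply]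
  · rw [dist_eq_norm, ← cfc_sub g h a]
    refine (norm_cfc_le (half_pos hε).le fun s _ => ?_).trans_lt (half_lt_self hε)
    rw [h_def, sub_sub_cancel, Real.norm_eq_abs, abs_le]
    exact ⟨le_max_left _ _, max_le (by linarith) (min_le_left _ _)⟩

variable [PartialOrder A] [StarOrderedRing A]

lemma mem_Icc_of_mem_spectrum_star_mul_self {a : A} {s : ℝ}
    (hs : s ∈ spectrum ℝ (star a * a)) : s ∈ Set.Icc 0 (‖a‖ ^ 2) :=
  ⟨spectrum_nonneg_of_nonneg (star_mul_self_nonneg a) hs,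
    (le_algebraMap_iff_spectrum_le (R := ℝ)).mp CStarAlgebra.star_mul_le_algebraMap_norm_sq s hs⟩

lemma norm_mul_cfc_star_mul_self_le (a : A) {h : ℝ → ℝ} (hh : Continuous h) {m : ℝ}
    (hm : 0 ≤ m) (hbound : ∀ s ∈ Set.Icc 0 (‖a‖ ^ 2), s * h s ^ 2 ≤ m ^ 2) :
    ‖a * cfc h (star a * a)‖ ≤ m := by
  have hsq : ‖a * cfc h (star a * a)‖ ^ 2 ≤ m ^ 2 := by
    rw [sq, ← CStarRing.norm_star_mul_self, star_mul_self_mul_cfc_star_mul_self a hh]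
    refine norm_cfc_le (by positivity) fun s hs => ?_
    have hs' := mem_Icc_of_mem_spectrum_star_mul_self hs
    rw [Real.norm_of_nonneg (by have := hs'.1; positivity)]
    exact hbound s hs'
  exact (pow_le_pow_iff_left₀ (norm_nonneg _) hm two_ne_zero).mp hsq

end CStar

section Banach

variable {𝕜 E F : Type*} [NontriviallyNormedField 𝕜] [NormedAddCommGroup E] [NormedSpace 𝕜 E]
  [NormedAddCommGroup F] [NormedSpace 𝕜 F]

lemma ContinuousLinearMap.isCompactOperator_of_finiteDimensional_range
    [LocallyCompactSpace 𝕜] (T : E →L[𝕜] F)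
    [FiniteDimensional 𝕜 (LinearMap.range (T : E →ₗ[𝕜] F))] : IsCompactOperator T :=
  have := FiniteDimensional.proper 𝕜 (LinearMap.range (T : E →ₗ[𝕜] F))
  (isCompactOperator_of_locallyCompactSpace_dom
    (T.codRestrict _ (LinearMap.mem_range_self (T : E →ₗ[𝕜] F)))).clm_comp
    (Submodule.subtypeL _)

lemma Submodule.finiteDimensional_of_mul_norm_le_of_isCompactOperator [CompleteSpace 𝕜]
    [CompleteSpace E] {T C : E →L[𝕜] F} (hC : IsCompactOperator C) {V : Submodule 𝕜 E} {m : ℝ}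
    (hV : ∀ y ∈ V, m * ‖y‖ ≤ ‖T y‖) (hTC : ‖T - C‖ < m) : FiniteDimensional 𝕜 V := by
  set κ := m - ‖T - C‖
  have hκ : 0 < κ := sub_pos.mpr hTC
  set W := V.topologicalClosure
  have hW : ∀ y ∈ W, κ * ‖y‖ ≤ ‖C y‖ := by
    suffices (W : Set E) ⊆ {y | κ * ‖y‖ ≤ ‖C y‖} from this
    refine V.topologicalClosure_coe ▸
      closure_minimal (fun y hy => ?_) (isClosed_le (by fun_prop) (by fun_prop))
    have h1 := hV y hy
    have h2 : ‖T y‖ ≤ ‖(T - C) y‖ + ‖C y‖ := by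
      simpa using norm_add_le ((T - C) y) (C y)
    show (m - ‖T - C‖) * ‖y‖ ≤ ‖C y‖
    linarith [(T - C).le_opNorm y]
  -- `C` restricted to the Banach space `W` is compact and bounded below, so `id_W` is compact.
  have : CompleteSpace W := V.isClosed_topologicalClosure.completeSpace_coe
  set D : W →L[𝕜] F := C ∘L W.subtypeL
  have hD : AntilipschitzWith ⟨κ⁻¹, by positivity⟩ D :=
    D.antilipschitz_of_bound fun y => by
      change ‖y‖ ≤ κ⁻¹ * ‖C y‖
      rw [← div_eq_inv_mul, le_div_iff₀ hκ, mul_comm]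
      exact hW y y.2
  have hDc : IsCompactOperator D := hC.comp_clm W.subtypeL
  obtain ⟨K, hK, hDK⟩ := hDc.image_closedBall_subset_compact 1
  have hid : IsCompactOperator (id : W → W) :=
    ⟨D ⁻¹' K, (hD.isClosedEmbedding D.uniformContinuous).isCompact_preimage hK,
      Filter.mem_of_superset (Metric.closedBall_mem_nhds 0 one_pos)
        fun y hy => hDK ⟨y, hy, rfl⟩⟩
  have : FiniteDimensional 𝕜 W := .of_isCompactOperator_id hid
  exact Submodule.finiteDimensional_of_le V.le_topologicalClosure

end Banach

section Hilbert

variable {𝕜 E F : Type*} [RCLike 𝕜] [NormedAddCommGroup E] [InnerProductSpace 𝕜 E]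
  [CompleteSpace E] [NormedAddCommGroup F] [InnerProductSpace 𝕜 F] [CompleteSpace F]

namespace ContinuousLinearMap

lemma norm_apply_le_of_adjoint_comp_self_le {X Y : E →L[𝕜] F}
    (h : adjoint X ∘L X ≤ adjoint Y ∘L Y) (x : E) : ‖X x‖ ≤ ‖Y x‖ := by
  have hx := ((le_def _ _).mp h).re_inner_nonneg_left x
  rw [sub_apply, inner_sub_left, map_sub, ← apply_norm_sq_eq_inner_adjoint_left,
    ← apply_norm_sq_eq_inner_adjoint_left, sub_nonneg] at hx
  exact (pow_le_pow_iff_left₀ (norm_nonneg _) (norm_nonneg _) two_ne_zero).mp hx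

end ContinuousLinearMap

variable {H : Type*} [NormedAddCommGroup H] [InnerProductSpace ℂ H] [CompleteSpace H]

lemma mul_norm_le_norm_apply_of_mem_range_cfc_star_mul_self (T : H →L[ℂ] H) {f : ℝ → ℝ}
    (hf : Continuous f) {m : ℝ} (hf0 : Set.EqOn f 0 (Set.Iic (m ^ 2))) {y : H}
    (hy : y ∈ LinearMap.range ((cfc f (star T * T) : H →L[ℂ] H) : H →ₗ[ℂ] H)) :
    m * ‖y‖ ≤ ‖T y‖ := by
  obtain ⟨x, rfl⟩ := hy
  set B := cfc f (star T * T)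
  have hB : IsSelfAdjoint B := .cfc
  have hle : star (m • B) * (m • B) ≤ star (T * B) * (T * B) := by
    rw [star_mul_self_mul_cfc_star_mul_self T hf, star_smul, star_trivial, hB.star_eq,
      smul_mul_smul_comm, ← cfc_mul f f _ (by fun_prop) (by fun_prop),
      ← cfc_const_mul _ _ _ (by fun_prop)]
    refine cfc_mono fun s _ => ?_
    rcases le_or_gt s (m ^ 2) with hs | hs
    · simp [hf0 hs]
    · nlinarith [sq_nonneg (f s)]
  calc m * ‖B x‖ ≤ ‖(m • B) x‖ := by
        rw [smul_apply, norm_smul, Real.norm_eq_abs]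
        gcongr
        exact le_abs_self m
    _ ≤ ‖(T * B) x‖ := ContinuousLinearMap.norm_apply_le_of_adjoint_comp_self_le hle x

lemma isCompactOperator_cfc_star_mul_self {T C : H →L[ℂ] H} (hC : IsCompactOperator C) {m : ℝ}
    (hTC : ‖T - C‖ < m) {f : ℝ → ℝ} (hf : Continuous f)
    (hf0 : Set.EqOn f 0 (Set.Iic (m ^ 2))) :
    IsCompactOperator ⇑(cfc f (star T * T) : H →L[ℂ] H) := by
  have := Submodule.finiteDimensional_of_mul_norm_le_of_isCompactOperator hC
    (fun y hy => mul_norm_le_norm_apply_of_mem_range_cfc_star_mul_self T hf hf0 hy) hTC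
  exact ContinuousLinearMap.isCompactOperator_of_finiteDimensional_range _

lemma isCompactOperator_cfc_star_mul_self_of_forall_norm_sub_lt {T : H →L[ℂ] H} {a : ℝ}
    (ha : 0 ≤ a) (happrox : ∀ m > a, ∃ C : H →L[ℂ] H, IsCompactOperator C ∧ ‖T - C‖ < m)
    {g : ℝ → ℝ} (hg : Continuous g) (hg0 : Set.EqOn g 0 (Set.Iic (a ^ 2))) :
    IsCompactOperator ⇑(cfc g (star T * T) : H →L[ℂ] H) := by
  refine IsClosed.cfc_mem_of_forall_eqOn_zero_Iic (S := {C : H →L[ℂ] H | IsCompactOperator C})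
    isClosed_setOfPred_isCompactOperator (fun c hc f hf hf0 => ?_) hg hg0
  have hc0 : 0 ≤ c := (sq_nonneg a).trans hc.le
  obtain ⟨C, hC, hTC⟩ := happrox √c ((Real.lt_sqrt ha).mpr hc)
  exact isCompactOperator_cfc_star_mul_self hC hTC hf (by rwa [Real.sq_sqrt hc0])

end Hilbert

section SoftThreshold

/-- `softThresholdRatio a s = (√s - a)⁺ / √s`, written so that it is visibly continuous when
`0 < a`. -/
noncomputable def softThresholdRatio (a s : ℝ) : ℝ := 1 - a / √(max s (a ^ 2))

variable {a : ℝ}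

lemma le_sqrt_max_sq (s : ℝ) : a ≤ √(max s (a ^ 2)) :=
  Real.le_sqrt_of_sq_le (le_max_right _ _)

lemma sq_sqrt_max_sq (s : ℝ) : √(max s (a ^ 2)) ^ 2 = max s (a ^ 2) :=
  Real.sq_sqrt (le_max_of_le_right (sq_nonneg a))

lemma mul_div_sqrt_max_sq_sq_le (ha : 0 < a) (s x : ℝ) :
    s * (x / √(max s (a ^ 2))) ^ 2 ≤ x ^ 2 := by
  have ht : 0 < √(max s (a ^ 2)) := ha.trans_le (le_sqrt_max_sq s)
  rw [div_pow, mul_div_assoc', div_le_iff₀ (by positivity), mul_comm (x ^ 2), sq_sqrt_max_sq]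
  exact mul_le_mul_of_nonneg_right (le_max_left _ _) (sq_nonneg x)

lemma continuous_softThresholdRatio (ha : 0 < a) : Continuous (softThresholdRatio a) :=
  continuous_const.sub
    (continuous_const.div (by fun_prop) fun s => (ha.trans_le (le_sqrt_max_sq s)).ne')

lemma softThresholdRatio_eqOn_zero (ha : 0 < a) :
    Set.EqOn (softThresholdRatio a) 0 (Set.Iic (a ^ 2)) := fun s hs => by
  simp [softThresholdRatio, max_eq_right (Set.mem_Iic.mp hs), Real.sqrt_sq ha.le, ha.ne']

lemma mul_one_sub_softThresholdRatio_sq_le (ha : 0 < a) (s : ℝ) :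
    s * (1 - softThresholdRatio a s) ^ 2 ≤ a ^ 2 := by
  simpa [softThresholdRatio] using mul_div_sqrt_max_sq_sq_le ha s a

lemma mul_softThresholdRatio_sq_le (ha : 0 < a) {b s : ℝ} (hb : 0 ≤ b)
    (hs : s ≤ (a + b) ^ 2) : s * softThresholdRatio a s ^ 2 ≤ b ^ 2 := by
  set t := √(max s (a ^ 2))
  have hta : a ≤ t := le_sqrt_max_sq s
  have htb : t ≤ a + b := by
    refine (pow_le_pow_iff_left₀ (ha.le.trans hta) (by linarith) two_ne_zero).mp ?_
    rw [sq_sqrt_max_sq]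
    exact max_le hs (by gcongr; linarith)
  have hst : softThresholdRatio a s = (t - a) / t := by
    simp [softThresholdRatio, t, sub_div, div_self (ha.trans_le hta).ne']
  rw [hst]
  refine (mul_div_sqrt_max_sq_sq_le ha s _).trans ?_
  gcongr
  linarith

end SoftThreshold

section BallProximinal

variable {H : Type*} [NormedAddCommGroup H] [InnerProductSpace ℂ H] [CompleteSpace H]

theorem exists_isCompactOperator_norm_le_one_norm_sub_le (T : H →L[ℂ] H) {a : ℝ}
    (ha : 0 ≤ a) (happrox : ∀ m > a, ∃ C : H →L[ℂ] H, IsCompactOperator C ∧ ‖C‖ ≤ 1 ∧ ‖T - C‖ < m) :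
    ∃ K : H →L[ℂ] H, IsCompactOperator K ∧ ‖K‖ ≤ 1 ∧ ‖T - K‖ ≤ a := by
  have hT : ‖T‖ ≤ a + 1 := le_of_forall_gt_imp_ge_of_dense fun x hx => by
    obtain ⟨C, -, hC1, hTC⟩ := happrox (x - 1) (by linarith)
    linarith [norm_le_norm_sub_add T C]
  have happrox' : ∀ m > a, ∃ C : H →L[ℂ] H, IsCompactOperator C ∧ ‖T - C‖ < m :=
    fun m hm => let ⟨C, hC, _, hTC⟩ := happrox m hm; ⟨C, hC, hTC⟩
  rcases ha.eq_or_lt with rfl | ha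
  · have hTc : IsCompactOperator T := isClosed_setOfPred_isCompactOperator.closure_subset <|
      Metric.mem_closure_iff.mpr fun ε hε =>
        let ⟨C, hC, hTC⟩ := happrox' ε hε; ⟨C, hC, by rwa [dist_eq_norm]⟩
    exact ⟨T, hTc, by simpa using hT, by simp⟩
  set g := softThresholdRatio a
  have hg := continuous_softThresholdRatio ha
  refine ⟨T * cfc g (star T * T),
    (isCompactOperator_cfc_star_mul_self_of_forall_norm_sub_lt ha.le happrox' hg
      (softThresholdRatio_eqOn_zero ha)).clm_comp T, ?_, ?_⟩
  · exact norm_mul_cfc_star_mul_self_le T hg zero_le_one fun s hs =>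
      mul_softThresholdRatio_sq_le ha zero_le_one (hs.2.trans (by gcongr))
  · have hTK : T - T * cfc g (star T * T) = T * cfc (fun s => 1 - g s) (star T * T) := by
      rw [cfc_sub (fun _ => 1) g, cfc_const_one ℝ (star T * T), mul_sub, mul_one]
    rw [hTK]
    exact norm_mul_cfc_star_mul_self_le T (by fun_prop) ha.le fun s _ =>
      mul_one_sub_softThresholdRatio_sq_le ha s

end BallProximinal

theorem stmt_1_general {H : Type*} [NormedAddCommGroup H] [InnerProductSpace ℂ H] [CompleteSpace H]
    (T : H →L[ℂ] H) :
    ∃ K : H →L[ℂ] H, IsCompactOperator ⇑K ∧ ‖K‖ ≤ 1 ∧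
      ‖T - K‖ = Metric.infDist T {K' : H →L[ℂ] H | IsCompactOperator ⇑K' ∧ ‖K'‖ ≤ 1} := by
  set S := {K' : H →L[ℂ] H | IsCompactOperator ⇑K' ∧ ‖K'‖ ≤ 1}
  have hS : S.Nonempty := ⟨0, isCompactOperator_zero, by simp⟩
  obtain ⟨K, hK, hK1, hTK⟩ := exists_isCompactOperator_norm_le_one_norm_sub_le T
    Metric.infDist_nonneg fun m hm => by
      obtain ⟨C, ⟨hC, hC1⟩, hTC⟩ := (Metric.infDist_lt_iff hS).mp hm
      exact ⟨C, hC, hC1, by rwa [← dist_eq_norm]⟩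
  refine ⟨K, hK, hK1, hTK.antisymm ?_⟩
  simpa [dist_eq_norm] using
    Metric.infDist_le_dist_of_mem (x := T) (show K ∈ S from ⟨hK, hK1⟩)

/-- For an infinite-dimensional complex Hilbert space `H`, the compact operators are ball
proximinal in `B(H)`: every bounded operator `T` admits a best approximation from the closed
unit ball of the compact operators. -/
theorem stmt_1 {H : Type*} [NormedAddCommGroup H] [InnerProductSpace ℂ H] [CompleteSpace H]
    (hH : ¬ FiniteDimensional ℂ H) (T : H →L[ℂ] H) :
    ∃ K : H →L[ℂ] H, IsCompactOperator ⇑K ∧ ‖K‖ ≤ 1 ∧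
      ‖T - K‖ = Metric.infDist T {K' : H →L[ℂ] H | IsCompactOperator ⇑K' ∧ ‖K'‖ ≤ 1} :=
  stmt_1_general T
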